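/- arXiv:1412.7793 — 3 statements merged into one kernel-verified Lean document; each statement's English description precedes it below -/
import Mathlib

section
/- For fixed β > 0 and a > 0, the map Δ ↦ Δ·f(√(Δ²+x²)) is monotone nondecreasing in Δ ≥ 0 for each fixed x ≥ 0, where f(t) = tanh((β/2)t)/t; consequently A_β is monotone nondecreasing on [0,∞). -/
lemma tanh_mono' {x y : ℝ} (h : x ≤ y) : Real.tanh x ≤ Real.tanh y := by
  rw [Real.tanh_eq_sinh_div_cosh, Real.tanh_eq_sinh_div_cosh,
    div_le_div_iff₀ (Real.cosh_pos x) (Real.cosh_pos y)]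
  have h1 : 0 ≤ Real.sinh (y - x) := Real.sinh_nonneg_iff.2 (by linarith)
  rw [Real.sinh_sub] at h1
  linarith

lemma continuous_tanh' : Continuous Real.tanh := by
  have h : Real.tanh = fun x => Real.sinh x / Real.cosh x :=
    funext fun x => Real.tanh_eq_sinh_div_cosh x
  rw [h]
  exact Real.continuous_sinh.div Real.continuous_cosh fun x => (Real.cosh_pos x).ne'

lemma tanh_nonneg' {x : ℝ} (h : 0 ≤ x) : 0 ≤ Real.tanh x := by
  have := tanh_mono' h
  rwa [Real.tanh_zero] at this

theorem A_beta_monotone (β a : ℝ) (hβ : 0 < β) (ha : 0 < a)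
    (f : ℝ → ℝ) (hf : ∀ t : ℝ, f t = if t = 0 then β / 2 else Real.tanh (β / 2 * t) / t) :
    (∀ x : ℝ, 0 ≤ x → ∀ Δ₁ Δ₂ : ℝ, 0 ≤ Δ₁ → Δ₁ ≤ Δ₂ →
        Δ₁ * f (Real.sqrt (Δ₁ ^ 2 + x ^ 2)) ≤ Δ₂ * f (Real.sqrt (Δ₂ ^ 2 + x ^ 2))) ∧
    (∀ Δ₁ Δ₂ : ℝ, 0 ≤ Δ₁ → Δ₁ ≤ Δ₂ →
        Δ₁ * ∫ x in (0:ℝ)..a, f (Real.sqrt (Δ₁ ^ 2 + x ^ 2))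
          ≤ Δ₂ * ∫ x in (0:ℝ)..a, f (Real.sqrt (Δ₂ ^ 2 + x ^ 2))) := by
  -- f is nonnegative on nonneg arguments
  have hfnn : ∀ t : ℝ, 0 ≤ t → 0 ≤ f t := by
    intro t ht
    rw [hf t]
    split_ifs with h
    · positivity
    · have ht' : 0 < t := lt_of_le_of_ne ht (Ne.symm h)
      exact div_nonneg (tanh_nonneg' (by positivity)) ht'.le
  -- the pointwise monotonicity
  have key : ∀ x : ℝ, ∀ Δ₁ Δ₂ : ℝ, 0 ≤ Δ₁ → Δ₁ ≤ Δ₂ →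
      Δ₁ * f (Real.sqrt (Δ₁ ^ 2 + x ^ 2)) ≤ Δ₂ * f (Real.sqrt (Δ₂ ^ 2 + x ^ 2)) := by
    intro x Δ₁ Δ₂ h1 h12
    have h2 : 0 ≤ Δ₂ := le_trans h1 h12
    rcases eq_or_lt_of_le h1 with h1' | h1'
    · -- Δ₁ = 0
      rw [← h1', zero_mul]
      exact mul_nonneg h2 (hfnn _ (Real.sqrt_nonneg _))
    · -- Δ₁ > 0
      have hΔ2 : 0 < Δ₂ := lt_of_lt_of_le h1' h12
      have hs1 : 0 < Real.sqrt (Δ₁ ^ 2 + x ^ 2) := Real.sqrt_pos.2 (by positivity)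
      have hs2 : 0 < Real.sqrt (Δ₂ ^ 2 + x ^ 2) := Real.sqrt_pos.2 (by positivity)
      rw [hf, hf, if_neg hs1.ne', if_neg hs2.ne']
      set s1 := Real.sqrt (Δ₁ ^ 2 + x ^ 2) with hs1d
      set s2 := Real.sqrt (Δ₂ ^ 2 + x ^ 2) with hs2d
      have hsq1 : s1 ^ 2 = Δ₁ ^ 2 + x ^ 2 := Real.sq_sqrt (by positivity)
      have hsq2 : s2 ^ 2 = Δ₂ ^ 2 + x ^ 2 := Real.sq_sqrt (by positivity)
      have hs12 : s1 ≤ s2 := by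
        rw [hs1d, hs2d]
        apply Real.sqrt_le_sqrt
        nlinarith [sq_nonneg x, mul_le_mul h12 h12 h1 h2]
      -- rewrite as (Δ/s) * tanh
      have e1 : Δ₁ * (Real.tanh (β / 2 * s1) / s1) = (Δ₁ / s1) * Real.tanh (β / 2 * s1) := by
        ring
      have e2 : Δ₂ * (Real.tanh (β / 2 * s2) / s2) = (Δ₂ / s2) * Real.tanh (β / 2 * s2) := by
        ring
      rw [e1, e2]
      apply mul_le_mul
      · rw [div_le_div_iff₀ hs1 hs2]
        have e3 : Δ₁ * s2 = Real.sqrt (Δ₁ ^ 2 * (Δ₂ ^ 2 + x ^ 2)) := by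
          rw [Real.sqrt_mul (by positivity), Real.sqrt_sq h1, hs2d]
        have e4 : Δ₂ * s1 = Real.sqrt (Δ₂ ^ 2 * (Δ₁ ^ 2 + x ^ 2)) := by
          rw [Real.sqrt_mul (by positivity), Real.sqrt_sq h2, hs1d]
        rw [e3, e4]
        apply Real.sqrt_le_sqrt
        nlinarith [sq_nonneg x, mul_le_mul h12 h12 h1 h2]
      · exact tanh_mono' (by nlinarith)
      · exact tanh_nonneg' (by positivity)
      · positivity
  refine ⟨fun x _ => key x, ?_⟩
  intro Δ₁ Δ₂ h1 h12
  have h2 : 0 ≤ Δ₂ := le_trans h1 h12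
  -- continuity / integrability for positive Δ
  have hint : ∀ Δ : ℝ, 0 < Δ →
      Continuous (fun x : ℝ => f (Real.sqrt (Δ ^ 2 + x ^ 2))) := by
    intro Δ hΔ
    have heq : (fun x : ℝ => f (Real.sqrt (Δ ^ 2 + x ^ 2))) =
        fun x : ℝ => Real.tanh (β / 2 * Real.sqrt (Δ ^ 2 + x ^ 2)) / Real.sqrt (Δ ^ 2 + x ^ 2) := by
      funext x
      have hs : 0 < Real.sqrt (Δ ^ 2 + x ^ 2) := Real.sqrt_pos.2 (by positivity)
      rw [hf, if_neg hs.ne']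
    rw [heq]
    have hc : Continuous fun x : ℝ => Real.sqrt (Δ ^ 2 + x ^ 2) := by
      exact (Real.continuous_sqrt).comp (by continuity)
    exact (continuous_tanh'.comp (continuous_const.mul hc)).div hc
      fun x => (Real.sqrt_pos.2 (by positivity)).ne'
  rcases eq_or_lt_of_le h1 with h1' | h1'
  · -- Δ₁ = 0
    rw [← h1', zero_mul]
    rcases eq_or_lt_of_le (h1'.symm ▸ h12 : (0:ℝ) ≤ Δ₂) with h2' | h2'
    · rw [← h2', zero_mul]
    · apply mul_nonneg h2
      apply intervalIntegral.integral_nonneg ha.le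
      intro x _
      exact hfnn _ (Real.sqrt_nonneg _)
  · -- Δ₁ > 0
    have hΔ2 : 0 < Δ₂ := lt_of_lt_of_le h1' h12
    rw [← intervalIntegral.integral_const_mul, ← intervalIntegral.integral_const_mul]
    apply intervalIntegral.integral_mono_on ha.le
    · exact (continuous_const.mul (hint Δ₁ h1')).intervalIntegrable 0 a
    · exact (continuous_const.mul (hint Δ₂ hΔ2)).intervalIntegrable 0 a
    · intro x _
      exact key x Δ₁ Δ₂ h1 h12
end

section
/- The function u ↦ u·tanh((β/2)·√(u²+x²))/√(u²+x²) is strictly increasing on [0,∞) for every fixed x > 0 and β > 0. -/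
/-! Write the function as `(u / √(u² + x²)) · tanh (β/2 · √(u² + x²))`. On `[0, ∞)` the first
factor is nonnegative and nondecreasing, and the second is nonnegative and strictly increasing
because `√(u² + x²)` is; the first factor is positive at the larger point, which makes the
product strictly increasing. -/

open Real Set

theorem Real.tanh_strictMono : StrictMono tanh := fun a b hab ↦ by
  by_contra! h
  have := strictMonoOn_artanh.monotoneOn ⟨neg_one_lt_tanh b, tanh_lt_one b⟩
    ⟨neg_one_lt_tanh a, tanh_lt_one a⟩ h
  rw [artanh_tanh, artanh_tanh] at this
  exact this.not_gt hab

theorem Real.tanh_nonneg {x : ℝ} (hx : 0 ≤ x) : 0 ≤ tanh x := by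
  simpa using tanh_strictMono.monotone hx

theorem monotoneOn_div_sqrt_sq_add {c : ℝ} (hc : 0 ≤ c) :
    MonotoneOn (fun u : ℝ ↦ u / √(u ^ 2 + c)) (Ici 0) := by
  intro a (ha : 0 ≤ a) b (hb : 0 ≤ b) hab
  rcases ha.eq_or_lt with rfl | ha
  · simp only [zero_div]
    positivity
  rw [← pow_le_pow_iff_left₀ (by positivity) (by positivity) two_ne_zero, div_pow, div_pow,
    sq_sqrt (by positivity), sq_sqrt (by positivity),
    div_le_div_iff₀ (by nlinarith) (by nlinarith)]
  nlinarith [mul_le_mul_of_nonneg_right (pow_le_pow_left₀ ha.le hab 2) hc]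

theorem phi_strictMono_general (β x : ℝ) (hβ : 0 < β) :
    StrictMonoOn
      (fun u : ℝ =>
        u * Real.tanh (β / 2 * Real.sqrt (u ^ 2 + x ^ 2)) / Real.sqrt (u ^ 2 + x ^ 2))
      (Set.Ici 0) := by
  intro a (ha : 0 ≤ a) b (hb : 0 ≤ b) hab
  have hr : √(a ^ 2 + x ^ 2) < √(b ^ 2 + x ^ 2) :=
    sqrt_lt_sqrt (by positivity) (by gcongr)
  have hb_pos : 0 < b / √(b ^ 2 + x ^ 2) :=
    div_pos (ha.trans_lt hab) (sqrt_pos.2 (by nlinarith))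
  simp only [mul_div_right_comm _ (tanh _)]
  exact mul_lt_mul' (monotoneOn_div_sqrt_sq_add (sq_nonneg x) ha hb hab.le)
    (tanh_strictMono (by gcongr)) (tanh_nonneg (by positivity)) hb_pos

theorem phi_strictMono (β x : ℝ) (hβ : 0 < β) (hx : 0 < x) :
    StrictMonoOn
      (fun u : ℝ =>
        u * Real.tanh (β / 2 * Real.sqrt (u ^ 2 + x ^ 2)) / Real.sqrt (u ^ 2 + x ^ 2))
      (Set.Ici 0) :=
  phi_strictMono_general β x hβ
end

section
/- Let c > 0 and suppose H(u) = u − c·A(u) where A(u) = u·Σ_k min_{x∈[x_k, x_{k+1}]} f_β(√(u²+x²))·w_k with f_β(t)=tanh((β/2)t)/t and all x_k ≥ 0, w_k > 0. If β·c·Σ_k w_k/2 < 1, then H is strictly increasing on [0,∞) and H(u) = s has at most one nonnegative solution for each s ≥ 0. -/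
/-!
`tanh` is concave on `[0, ∞)`, its derivative `1 / cosh²` being decreasing there, so the chord
slope `tanh t / t` decreases and stays below `tanh' 0 = 1`. Hence `f_β` is antitone on `[0, ∞)`
with maximum `f_β 0 = β / 2`, and so is, as a function of `u ≥ 0`, each cell infimum
`m_k(u) = inf_{y ∈ [x_k, x_{k+1}]} f_β (√(u² + y²))`.
Writing `A u = u S(u)` with `S = Σ m_k w_k` antitone and `S ≤ (β / 2) Σ w_k`, for `0 ≤ a < b`
  `A b - A a ≤ b S(a) - a S(a) ≤ (β / 2) (Σ w_k) (b - a)`,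
so `H b - H a ≥ (1 - β c Σ w_k / 2) (b - a) > 0`.
-/

open Set Real

namespace Real

theorem hasDerivAt_tanh (x : ℝ) : HasDerivAt tanh (1 / cosh x ^ 2) x := by
  rw [show tanh = fun y => sinh y / cosh y from funext tanh_eq_sinh_div_cosh]
  refine ((hasDerivAt_sinh x).div (hasDerivAt_cosh x) (cosh_pos x).ne').congr_deriv ?_
  rw [← cosh_sq_sub_sinh_sq x]
  ring

theorem concaveOn_tanh : ConcaveOn ℝ (Ici 0) tanh := by
  refine AntitoneOn.concaveOn_of_deriv (convex_Ici 0)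
    (fun y _ => (hasDerivAt_tanh y).continuousAt.continuousWithinAt)
    (fun y _ => (hasDerivAt_tanh y).differentiableAt.differentiableWithinAt) ?_
  rw [interior_Ici]
  intro a ha b hb hab
  have hcosh : cosh a ≤ cosh b := cosh_le_cosh.mpr (abs_le_abs_of_nonneg (le_of_lt ha) hab)
  simp only [(hasDerivAt_tanh _).deriv]
  gcongr

theorem antitoneOn_tanh_div_self : AntitoneOn (fun t => tanh t / t) (Ioi 0) := by
  intro a ha b hb hab
  simpa [slope_def_field] using concaveOn_tanh.slope_anti self_mem_Ici
    ⟨mem_Ici.mpr (le_of_lt ha), ne_of_gt ha⟩ ⟨mem_Ici.mpr (le_of_lt hb), ne_of_gt hb⟩ hab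

theorem tanh_div_self_le_one {t : ℝ} (ht : 0 < t) : tanh t / t ≤ 1 := by
  simpa [slope_def_field] using
    concaveOn_tanh.slope_le_of_hasDerivAt self_mem_Ici ht.le ht (hasDerivAt_tanh 0)

theorem tanh_nonneg_s10 {x : ℝ} (hx : 0 ≤ x) : 0 ≤ tanh x := by
  rw [tanh_eq_sinh_div_cosh]
  exact div_nonneg (sinh_nonneg_iff.mpr hx) (cosh_pos x).le

end Real

section TanhKernel

variable {β : ℝ} {f : ℝ → ℝ}

theorem eq_half_mul_tanh_div_self (hβ : 0 < β)
    (hf : ∀ t, f t = if t = 0 then β / 2 else tanh (β / 2 * t) / t) {t : ℝ} (ht : 0 < t) :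
    f t = β / 2 * (tanh (β / 2 * t) / (β / 2 * t)) := by
  rw [hf, if_neg ht.ne']
  field_simp

theorem antitoneOn_of_eq_tanh_mul_div (hβ : 0 < β)
    (hf : ∀ t, f t = if t = 0 then β / 2 else tanh (β / 2 * t) / t) : AntitoneOn f (Ici 0) := by
  intro s hs t ht hst
  rcases (mem_Ici.mp ht).eq_or_lt with rfl | ht
  · rw [le_antisymm hst hs]
  rw [eq_half_mul_tanh_div_self hβ hf ht]
  rcases (mem_Ici.mp hs).eq_or_lt with rfl | hs
  · rw [hf, if_pos rfl]
    exact mul_le_of_le_one_right (by positivity) (tanh_div_self_le_one (by positivity))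
  · rw [eq_half_mul_tanh_div_self hβ hf hs]
    exact mul_le_mul_of_nonneg_left (antitoneOn_tanh_div_self (by positivity : 0 < β / 2 * s)
      (by positivity : 0 < β / 2 * t) (by gcongr)) (by positivity)

theorem nonneg_of_eq_tanh_mul_div (hβ : 0 ≤ β)
    (hf : ∀ t, f t = if t = 0 then β / 2 else tanh (β / 2 * t) / t) {t : ℝ} (ht : 0 ≤ t) :
    0 ≤ f t := by
  rw [hf]
  split_ifs
  · positivity
  · exact div_nonneg (tanh_nonneg_s10 (by positivity)) ht

end TanhKernel

noncomputable def radialInf (g : ℝ → ℝ) (u a b : ℝ) : ℝ :=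
  sInf ((fun y => g √(u ^ 2 + y ^ 2)) '' Icc a b)

section RadialInf

variable {g : ℝ → ℝ}

theorem bddBelow_image_radial (hg : BddBelow (g '' Ici 0)) (u : ℝ) (s : Set ℝ) :
    BddBelow ((fun y => g √(u ^ 2 + y ^ 2)) '' s) :=
  hg.mono <| by
    rintro _ ⟨y, -, rfl⟩
    exact ⟨_, sqrt_nonneg _, rfl⟩

theorem radialInf_le_apply_zero (hg : AntitoneOn g (Ici 0)) (hg' : BddBelow (g '' Ici 0))
    {a b : ℝ} (hab : a ≤ b) (u : ℝ) : radialInf g u a b ≤ g 0 :=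
  (csInf_le (bddBelow_image_radial hg' u _) ⟨a, left_mem_Icc.mpr hab, rfl⟩).trans
    (hg self_mem_Ici (sqrt_nonneg _) (sqrt_nonneg _))

theorem antitoneOn_radialInf (hg : AntitoneOn g (Ici 0)) (hg' : BddBelow (g '' Ici 0))
    {a b : ℝ} (hab : a ≤ b) : AntitoneOn (fun u => radialInf g u a b) (Ici 0) := by
  intro u hu v hv huv
  refine le_csInf ((nonempty_Icc.mpr hab).image _) ?_
  rintro _ ⟨y, hy, rfl⟩
  refine (csInf_le (bddBelow_image_radial hg' v _) ⟨y, hy, rfl⟩).trans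
    (hg (sqrt_nonneg _) (sqrt_nonneg _) ?_)
  have : u ^ 2 ≤ v ^ 2 := pow_le_pow_left₀ hu huv 2
  gcongr

variable {N : ℕ} {x : ℕ → ℝ}

theorem antitoneOn_sum_radialInf_mul (hg : AntitoneOn g (Ici 0)) (hg' : BddBelow (g '' Ici 0))
    (hx : ∀ k < N, x k ≤ x (k + 1)) :
    AntitoneOn (fun u => ∑ k ∈ Finset.range N,
      radialInf g u (x k) (x (k + 1)) * (x (k + 1) - x k)) (Ici 0) := by
  intro u hu v hv huv
  refine Finset.sum_le_sum fun k hk => ?_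
  have hxk := hx k (Finset.mem_range.mp hk)
  exact mul_le_mul_of_nonneg_right (antitoneOn_radialInf hg hg' hxk hu hv huv)
    (sub_nonneg.mpr hxk)

theorem sum_radialInf_mul_le (hg : AntitoneOn g (Ici 0)) (hg' : BddBelow (g '' Ici 0))
    (hx : ∀ k < N, x k ≤ x (k + 1)) (u : ℝ) :
    ∑ k ∈ Finset.range N, radialInf g u (x k) (x (k + 1)) * (x (k + 1) - x k) ≤
      g 0 * ∑ k ∈ Finset.range N, (x (k + 1) - x k) := by
  rw [Finset.mul_sum]
  refine Finset.sum_le_sum fun k hk => ?_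
  have hxk := hx k (Finset.mem_range.mp hk)
  exact mul_le_mul_of_nonneg_right (radialInf_le_apply_zero hg hg' hxk u) (sub_nonneg.mpr hxk)

end RadialInf

theorem strictMonoOn_sub_mul_self_mul {S : ℝ → ℝ} {c L : ℝ} (hS : AntitoneOn S (Ici 0))
    (hSL : ∀ u, 0 ≤ u → S u ≤ L) (hc : 0 ≤ c) (hcL : c * L < 1) :
    StrictMonoOn (fun u => u - c * (u * S u)) (Ici 0) := by
  intro a ha b hb hab
  have hgrowth : b * S b - a * S a ≤ (b - a) * L :=
    calc b * S b - a * S a ≤ b * S a - a * S a := by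
          gcongr
          exact hS ha hb hab.le
      _ = (b - a) * S a := by ring
      _ ≤ (b - a) * L := by
          gcongr
          exact hSL a ha
  have := mul_le_mul_of_nonneg_left hgrowth hc
  dsimp only
  nlinarith

theorem H_strictMono_unique_solution_general (β c : ℝ) (hβ : 0 < β) (hc : 0 < c)
    (N : ℕ) (x : ℕ → ℝ)
    (hxmono : ∀ k < N, x k < x (k + 1))
    (f : ℝ → ℝ) (hf : ∀ t : ℝ, f t = if t = 0 then β / 2 else Real.tanh (β / 2 * t) / t)
    (A H : ℝ → ℝ)
    (hA : ∀ u : ℝ, A u = u * ∑ k ∈ Finset.range N,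
        sInf ((fun y : ℝ => f (Real.sqrt (u ^ 2 + y ^ 2))) '' Set.Icc (x k) (x (k + 1)))
          * (x (k + 1) - x k))
    (hH : ∀ u : ℝ, H u = u - c * A u)
    (hsmall : β * c * (∑ k ∈ Finset.range N, (x (k + 1) - x k)) / 2 < 1) :
    StrictMonoOn H (Set.Ici 0) ∧
      ∀ s : ℝ, 0 ≤ s → ∀ u₁ u₂ : ℝ, 0 ≤ u₁ → 0 ≤ u₂ → H u₁ = s → H u₂ = s → u₁ = u₂ := by
  have hf_anti := antitoneOn_of_eq_tanh_mul_div hβ hf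
  have hf_bdd : BddBelow (f '' Ici 0) := by
    refine ⟨0, ?_⟩
    rintro _ ⟨t, ht, rfl⟩
    exact nonneg_of_eq_tanh_mul_div hβ.le hf ht
  have hx : ∀ k < N, x k ≤ x (k + 1) := fun k hk => (hxmono k hk).le
  have hH_eq : H = fun u => u - c * (u * ∑ k ∈ Finset.range N,
      radialInf f u (x k) (x (k + 1)) * (x (k + 1) - x k)) :=
    funext fun u => by rw [hH, hA]; rfl
  have hmono : StrictMonoOn H (Ici 0) := by
    rw [hH_eq]
    refine strictMonoOn_sub_mul_self_mul (antitoneOn_sum_radialInf_mul hf_anti hf_bdd hx)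
      (fun u _ => sum_radialInf_mul_le hf_anti hf_bdd hx u) hc.le ?_
    rw [hf, if_pos rfl]
    linarith
  exact ⟨hmono, fun _ _ u₁ u₂ h₁ h₂ e₁ e₂ => hmono.injOn h₁ h₂ (e₁.trans e₂.symm)⟩

theorem H_strictMono_unique_solution (β c : ℝ) (hβ : 0 < β) (hc : 0 < c)
    (N : ℕ) (x : ℕ → ℝ) (hx0 : 0 ≤ x 0)
    (hxmono : ∀ k < N, x k < x (k + 1))
    (f : ℝ → ℝ) (hf : ∀ t : ℝ, f t = if t = 0 then β / 2 else Real.tanh (β / 2 * t) / t)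
    (A H : ℝ → ℝ)
    (hA : ∀ u : ℝ, A u = u * ∑ k ∈ Finset.range N,
        sInf ((fun y : ℝ => f (Real.sqrt (u ^ 2 + y ^ 2))) '' Set.Icc (x k) (x (k + 1)))
          * (x (k + 1) - x k))
    (hH : ∀ u : ℝ, H u = u - c * A u)
    (hsmall : β * c * (∑ k ∈ Finset.range N, (x (k + 1) - x k)) / 2 < 1) :
    StrictMonoOn H (Set.Ici 0) ∧
      ∀ s : ℝ, 0 ≤ s → ∀ u₁ u₂ : ℝ, 0 ≤ u₁ → 0 ≤ u₂ → H u₁ = s → H u₂ = s → u₁ = u₂ :=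
  H_strictMono_unique_solution_general β c hβ hc N x hxmono f hf A H hA hH hsmall
end
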